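/- Let ‖·‖ be a norm on ℝ^d with dual norm ‖·‖_*, let f : ℝ^d → ℝ be differentiable, L-smooth with respect to ‖·‖ (L > 0), bounded below with infimum value f^* attained as a minimum, and suppose f satisfies the Polyak–Łojasiewicz condition with constant μ > 0 with respect to ‖·‖: ‖∇f(x)‖_*² ≥ 2μ (f(x) − f^*) for all x. If (x_t)_{t≥0} is a sequence such that each x_{t+1} minimizes x ↦ ⟨∇f(x_t), x − x_t⟩ + (L/2) ‖x − x_t‖² over ℝ^d, then for every T ≥ 0, f(x_T) − f^* ≤ (1 − μ/L)^T (f(x_0) − f^*). -/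

import Mathlib

open scoped BigOperators

/-- The dual norm of a norm `N` on `ℝ^d`: `‖z‖_* = sup_{N x ≤ 1} ⟪z, x⟫`. -/
noncomputable def dualNorm {d : ℕ} (N : EuclideanSpace ℝ (Fin d) → ℝ)
    (z : EuclideanSpace ℝ (Fin d)) : ℝ :=
  sSup ((fun x => (inner ℝ z x : ℝ)) '' {x | N x ≤ 1})

/-!
Smoothness gives the descent lemma `f y ≤ f x + ⟪∇f x, y - x⟫ + (L/2) ‖y - x‖²`, whose
right-hand side is the local model minimized by a steepest descent step. Testing the model along
`y = x - (‖∇f x‖_* / L) u` with `‖u‖ ≤ 1` shows that its minimum is at most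
`-‖∇f x‖_*² / (2L)`.
Hence every step decreases `f` by at least `‖∇f(x_t)‖_*² / (2L) ≥ (μ/L) (f(x_t) - f^*)`.
The same bound, applied at any point and combined with `f ≥ f^*`, gives
`‖∇f x‖_*² ≤ 2L (f x - f^*)`; so either `μ ≤ L` and the contraction factor `1 - μ/L` is
nonnegative and can be iterated, or the PL inequality forces `f ≡ f^*`.
-/

theorem Seminorm.exists_pos_mul_norm_le {E : Type*} [NormedAddCommGroup E] [NormedSpace ℝ E]
    [FiniteDimensional ℝ E] (p : Seminorm ℝ E) (hp : ∀ x, p x = 0 → x = 0) :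
    ∃ c, 0 < c ∧ ∀ x, c * ‖x‖ ≤ p x := by
  rcases subsingleton_or_nontrivial E with _ | _
  · exact ⟨1, one_pos, fun x => by simp [Subsingleton.elim x 0]⟩
  obtain ⟨m, hm, hmin⟩ := (isCompact_sphere (0 : E) 1).exists_isMinOn
    (NormedSpace.sphere_nonempty.2 zero_le_one) p.convexOn.locallyLipschitz.continuous.continuousOn
  rw [mem_sphere_zero_iff_norm] at hm
  have hm0 : 0 < p m :=
    (apply_nonneg p m).lt_of_ne fun h => by simp [hp m h.symm] at hm
  refine ⟨p m, hm0, fun x => ?_⟩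
  rcases eq_or_ne x 0 with rfl | hx
  · simp
  have hx' : 0 < ‖x‖ := norm_pos_iff.2 hx
  have hunit : ‖x‖⁻¹ • x ∈ Metric.sphere (0 : E) 1 := by simp [norm_smul, hx'.ne']
  have : p m ≤ ‖x‖⁻¹ * p x := by simpa [map_smul_eq_mul] using hmin hunit
  rwa [← div_eq_inv_mul, le_div_iff₀ hx'] at this

theorem hasDerivAt_apply_add_smul {F : Type*} [NormedAddCommGroup F] [InnerProductSpace ℝ F]
    [CompleteSpace F] {f : F → ℝ} (hf : Differentiable ℝ f) (x v : F) (t : ℝ) :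
    HasDerivAt (fun s : ℝ => f (x + s • v)) (inner ℝ (gradient f (x + t • v)) v) t := by
  have hline : HasDerivAt (fun s : ℝ => x + s • v) v t := by
    simpa using ((hasDerivAt_id t).smul_const v).const_add x
  have := (hf _).hasGradientAt.hasFDerivAt.comp_hasDerivAt t hline
  rwa [InnerProductSpace.toDual_apply_apply] at this

section

variable {d : ℕ} (p : Seminorm ℝ (EuclideanSpace ℝ (Fin d)))

theorem bddAbove_inner_image_closedBall (hp : ∀ x, p x = 0 → x = 0)
    (z : EuclideanSpace ℝ (Fin d)) :
    BddAbove ((fun x => (inner ℝ z x : ℝ)) '' {x | p x ≤ 1}) := by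
  obtain ⟨c, hc, hpc⟩ := p.exists_pos_mul_norm_le hp
  refine ⟨‖z‖ / c, ?_⟩
  rintro _ ⟨u, hu, rfl⟩
  have hu' : ‖u‖ ≤ 1 / c := by rw [le_div_iff₀' hc]; exact (hpc u).trans hu
  calc (inner ℝ z u : ℝ) ≤ ‖z‖ * ‖u‖ := real_inner_le_norm z u
    _ ≤ ‖z‖ * (1 / c) := by gcongr
    _ = ‖z‖ / c := by ring

theorem dualNorm_nonneg (hp : ∀ x, p x = 0 → x = 0) (z : EuclideanSpace ℝ (Fin d)) :
    0 ≤ dualNorm p z :=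
  le_csSup (bddAbove_inner_image_closedBall p hp z) ⟨0, by simp, inner_zero_right z⟩

theorem dualNorm_le_of_forall_inner_le {z : EuclideanSpace ℝ (Fin d)} {b : ℝ}
    (h : ∀ u, p u ≤ 1 → (inner ℝ z u : ℝ) ≤ b) : dualNorm p z ≤ b :=
  csSup_le ⟨_, 0, by simp, rfl⟩ fun _ ⟨u, hu, hb⟩ => hb ▸ h u hu

theorem inner_le_dualNorm_mul (hp : ∀ x, p x = 0 → x = 0) (z v : EuclideanSpace ℝ (Fin d)) :
    (inner ℝ z v : ℝ) ≤ dualNorm p z * p v := by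
  rcases eq_or_ne v 0 with rfl | hv
  · simp
  have hpv : 0 < p v := (apply_nonneg p v).lt_of_ne fun h => hv (hp v h.symm)
  have hunit : p ((p v)⁻¹ • v) ≤ 1 := by
    rw [map_smul_eq_mul, Real.norm_of_nonneg (inv_nonneg.2 hpv.le), inv_mul_cancel₀ hpv.ne']
  have : (inner ℝ z ((p v)⁻¹ • v) : ℝ) ≤ dualNorm p z :=
    le_csSup (bddAbove_inner_image_closedBall p hp z) ⟨_, hunit, rfl⟩
  rwa [real_inner_smul_right, inv_mul_le_iff₀ hpv, mul_comm] at this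

theorem le_neg_sq_dualNorm_div_of_forall_le (hp : ∀ x, p x = 0 → x = 0) {L : ℝ} (hL : 0 < L)
    {z x : EuclideanSpace ℝ (Fin d)} {c : ℝ}
    (h : ∀ y, c ≤ (inner ℝ z (y - x) : ℝ) + L / 2 * p (y - x) ^ 2) :
    c ≤ -dualNorm p z ^ 2 / (2 * L) := by
  set D := dualNorm p z
  have hD0 : 0 ≤ D := dualNorm_nonneg p hp z
  rcases hD0.eq_or_lt with hD | hD
  · rw [← hD]
    simpa using h x
  have hbound : ∀ u, p u ≤ 1 → (inner ℝ z u : ℝ) ≤ (D ^ 2 / 2 - c * L) / D := by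
    intro u hu
    have hDL : 0 ≤ D / L := by positivity
    have hy := h (x - (D / L) • u)
    rw [sub_sub_cancel_left, inner_neg_right, real_inner_smul_right, map_neg_eq_map,
      map_smul_eq_mul, Real.norm_of_nonneg hDL] at hy
    have hpu : (D / L * p u) ^ 2 ≤ (D / L) ^ 2 := by
      gcongr
      exact mul_le_of_le_one_right hDL hu
    have hc : c ≤ -(D / L * inner ℝ z u) + L / 2 * (D / L) ^ 2 := by
      linarith [mul_le_mul_of_nonneg_left hpu (by positivity : (0 : ℝ) ≤ L / 2)]
    rw [le_div_iff₀ hD]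
    field_simp at hc
    linarith
  have hDle := dualNorm_le_of_forall_inner_le p hbound
  rw [le_div_iff₀ hD] at hDle
  rw [le_div_iff₀ (by positivity)]
  nlinarith

theorem apply_le_add_inner_gradient_add_sq (hp : ∀ x, p x = 0 → x = 0)
    {f : EuclideanSpace ℝ (Fin d) → ℝ} (hf : Differentiable ℝ f) {L : ℝ}
    (hsmooth : ∀ x x', dualNorm p (gradient f x' - gradient f x) ≤ L * p (x' - x))
    (x y : EuclideanSpace ℝ (Fin d)) :
    f y ≤ f x + inner ℝ (gradient f x) (y - x) + L / 2 * p (y - x) ^ 2 := by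
  set v := y - x
  set a : ℝ := inner ℝ (gradient f x) v
  -- the gap between the quadratic upper model and `f` along the segment is nondecreasing
  let g : ℝ → ℝ := fun t => t * a + L / 2 * p v ^ 2 * t ^ 2 - f (x + t • v)
  have hg : ∀ t, HasDerivAt g (a + L * p v ^ 2 * t - inner ℝ (gradient f (x + t • v)) v) t := by
    intro t
    have hq : HasDerivAt (fun t : ℝ => t * a + L / 2 * p v ^ 2 * t ^ 2)
        (a + L * p v ^ 2 * t) t := by
      refine (((hasDerivAt_id' t).mul_const a).add
        ((hasDerivAt_pow 2 t).const_mul (L / 2 * p v ^ 2))).congr_deriv ?_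
      push_cast
      ring
    exact hq.sub (hasDerivAt_apply_add_smul hf x v t)
  have hg' : ∀ t ∈ interior (Set.Ici (0 : ℝ)),
      0 ≤ a + L * p v ^ 2 * t - inner ℝ (gradient f (x + t • v)) v := by
    intro t ht
    rw [interior_Ici, Set.mem_Ioi] at ht
    have hpair := inner_le_dualNorm_mul p hp (gradient f (x + t • v) - gradient f x) v
    have hlip := hsmooth x (x + t • v)
    rw [add_sub_cancel_left, map_smul_eq_mul, Real.norm_of_nonneg ht.le] at hlip
    rw [inner_sub_left] at hpair
    nlinarith [mul_le_mul_of_nonneg_right hlip (apply_nonneg p v)]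
  have hmono : MonotoneOn g (Set.Ici 0) :=
    monotoneOn_of_hasDerivWithinAt_nonneg (convex_Ici 0)
      (fun t _ => (hg t).continuousAt.continuousWithinAt)
      (fun t _ => (hg t).hasDerivWithinAt) hg'
  have h01 : g 0 ≤ g 1 := hmono Set.self_mem_Ici (Set.mem_Ici.2 zero_le_one) zero_le_one
  norm_num [g, v] at h01
  linarith

theorem apply_le_sub_sq_dualNorm_div_of_forall_le (hp : ∀ x, p x = 0 → x = 0)
    {f : EuclideanSpace ℝ (Fin d) → ℝ} (hf : Differentiable ℝ f) {L : ℝ} (hL : 0 < L)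
    (hsmooth : ∀ x x', dualNorm p (gradient f x' - gradient f x) ≤ L * p (x' - x))
    {x x' : EuclideanSpace ℝ (Fin d)}
    (hx' : ∀ y, inner ℝ (gradient f x) (x' - x) + L / 2 * p (x' - x) ^ 2
      ≤ inner ℝ (gradient f x) (y - x) + L / 2 * p (y - x) ^ 2) :
    f x' ≤ f x - dualNorm p (gradient f x) ^ 2 / (2 * L) := by
  have hmodel := le_neg_sq_dualNorm_div_of_forall_le p hp hL hx'
  have hdescent := apply_le_add_inner_gradient_add_sq p hp hf hsmooth x x'
  rw [neg_div] at hmodel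
  linarith

theorem sq_dualNorm_gradient_le (hp : ∀ x, p x = 0 → x = 0)
    {f : EuclideanSpace ℝ (Fin d) → ℝ} (hf : Differentiable ℝ f) {L : ℝ} (hL : 0 < L)
    (hsmooth : ∀ x x', dualNorm p (gradient f x' - gradient f x) ≤ L * p (x' - x))
    {fstar : ℝ} (hbdd : ∀ x, fstar ≤ f x) (x : EuclideanSpace ℝ (Fin d)) :
    dualNorm p (gradient f x) ^ 2 ≤ 2 * L * (f x - fstar) := by
  have hmodel := le_neg_sq_dualNorm_div_of_forall_le p hp hL (z := gradient f x) (x := x)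
    (c := fstar - f x) fun y => by
    linarith [hbdd y, apply_le_add_inner_gradient_add_sq p hp hf hsmooth x y]
  rw [le_div_iff₀ (by positivity)] at hmodel
  linarith

end

theorem steepest_descent_convergence_pl_general {d : ℕ} (N : EuclideanSpace ℝ (Fin d) → ℝ)
    (hN_def : ∀ x, N x = 0 ↔ x = 0)
    (hN_smul : ∀ (c : ℝ) x, N (c • x) = |c| * N x)
    (hN_add : ∀ x y, N (x + y) ≤ N x + N y)
    (f : EuclideanSpace ℝ (Fin d) → ℝ) (hf : Differentiable ℝ f) (L : ℝ) (hL : 0 < L)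
    (hsmooth : ∀ x x', dualNorm N (gradient f x' - gradient f x) ≤ L * N (x' - x))
    (fstar : ℝ) (hbdd : ∀ x, fstar ≤ f x)
    (μ : ℝ)
    (hpl : ∀ x, 2 * μ * (f x - fstar) ≤ (dualNorm N (gradient f x)) ^ 2)
    (x : ℕ → EuclideanSpace ℝ (Fin d))
    (hmin : ∀ t, ∀ y, (inner ℝ (gradient f (x t)) (x (t + 1) - x t) : ℝ)
        + L / 2 * (N (x (t + 1) - x t)) ^ 2
      ≤ (inner ℝ (gradient f (x t)) (y - x t) : ℝ) + L / 2 * (N (y - x t)) ^ 2) :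
    ∀ T : ℕ, f (x T) - fstar ≤ (1 - μ / L) ^ T * (f (x 0) - fstar) := by
  intro T
  let p : Seminorm ℝ (EuclideanSpace ℝ (Fin d)) :=
    Seminorm.of N hN_add fun c x => by rw [Real.norm_eq_abs, hN_smul]
  have hp : ∀ x, p x = 0 → x = 0 := fun x => (hN_def x).1
  have hcontract : ∀ t, f (x (t + 1)) - fstar ≤ (1 - μ / L) * (f (x t) - fstar) := by
    intro t
    have hstep : f (x (t + 1)) ≤ f (x t) - dualNorm N (gradient f (x t)) ^ 2 / (2 * L) :=
      apply_le_sub_sq_dualNorm_div_of_forall_le p hp hf hL hsmooth (hmin t)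
    have hrate : μ / L * (f (x t) - fstar) ≤ dualNorm N (gradient f (x t)) ^ 2 / (2 * L) := by
      rw [show μ / L * (f (x t) - fstar) = 2 * μ * (f (x t) - fstar) / (2 * L) by field_simp]
      gcongr
      exact hpl (x t)
    linarith
  rcases le_or_gt μ L with hμL | hLμ
  · exact le_geom (u := fun t => f (x t) - fstar) (sub_nonneg.2 ((div_le_one hL).2 hμL)) T
      fun t _ => hcontract t
  have hconst : ∀ y, f y - fstar = 0 := fun y => by
    have hgrad : dualNorm N (gradient f y) ^ 2 ≤ 2 * L * (f y - fstar) :=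
      sq_dualNorm_gradient_le p hp hf hL hsmooth hbdd y
    nlinarith [hpl y, hbdd y]
  simp [hconst]

/-- If `f` is `L`-smooth w.r.t. a norm `N`, attains its global minimum value `fstar`,
satisfies the Polyak–Łojasiewicz condition `‖∇f(x)‖_*² ≥ 2μ (f(x) - fstar)` with `μ > 0`,
and `(x t)` is a steepest descent sequence, then
`f(x T) - fstar ≤ (1 - μ/L)^T (f(x 0) - fstar)` for every `T`. -/
theorem steepest_descent_convergence_pl {d : ℕ} (N : EuclideanSpace ℝ (Fin d) → ℝ)
    (hN_def : ∀ x, N x = 0 ↔ x = 0)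
    (hN_smul : ∀ (c : ℝ) x, N (c • x) = |c| * N x)
    (hN_add : ∀ x y, N (x + y) ≤ N x + N y)
    (f : EuclideanSpace ℝ (Fin d) → ℝ) (hf : Differentiable ℝ f) (L : ℝ) (hL : 0 < L)
    (hsmooth : ∀ x x', dualNorm N (gradient f x' - gradient f x) ≤ L * N (x' - x))
    (fstar : ℝ) (hbdd : ∀ x, fstar ≤ f x) (hatt : ∃ x, f x = fstar)
    (μ : ℝ) (hμ : 0 < μ)
    (hpl : ∀ x, 2 * μ * (f x - fstar) ≤ (dualNorm N (gradient f x)) ^ 2)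
    (x : ℕ → EuclideanSpace ℝ (Fin d))
    (hmin : ∀ t, ∀ y, (inner ℝ (gradient f (x t)) (x (t + 1) - x t) : ℝ)
        + L / 2 * (N (x (t + 1) - x t)) ^ 2
      ≤ (inner ℝ (gradient f (x t)) (y - x t) : ℝ) + L / 2 * (N (y - x t)) ^ 2) :
    ∀ T : ℕ, f (x T) - fstar ≤ (1 - μ / L) ^ T * (f (x 0) - fstar) :=
  steepest_descent_convergence_pl_general N hN_def hN_smul hN_add f hf L hL hsmooth fstar hbdd μ hpl
    x hmin
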